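/- (Converse / lower bound, Theorem 2) Let X, Y_{d_1}, …, Y_{d_K}, W, U be finite discrete random variables with W independent of (X, Y_{d_1}, …, Y_{d_K}), I(U; X) = 0, and H(Y_{d_1}, …, Y_{d_K} | W, U) = 0. Then H(U) ≥ max_{x : P(X=x)>0} H(Y_{d_1}, …, Y_{d_K} | X = x). -/

import Mathlib

open scoped BigOperators Classical

noncomputable section

/-- Probability of an event under a pmf `p` on a finite sample space. -/
def prE {Ω : Type*} [Fintype Ω] (p : Ω → ℝ) (E : Ω → Prop) : ℝ :=
  ∑ ω, if E ω then p ω else 0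

/-- `p` is a probability mass function. -/
def IsPMF {Ω : Type*} [Fintype Ω] (p : Ω → ℝ) : Prop :=
  (∀ ω, 0 ≤ p ω) ∧ ∑ ω, p ω = 1

/-- P(X = a). -/
def pr {Ω α : Type*} [Fintype Ω] (p : Ω → ℝ) (X : Ω → α) (a : α) : ℝ :=
  prE p (fun ω => X ω = a)

/-- Shannon entropy in bits. -/
def ent {Ω α : Type*} [Fintype Ω] [Fintype α] (p : Ω → ℝ) (X : Ω → α) : ℝ :=
  -∑ a, pr p X a * Real.logb 2 (pr p X a)

/-- Conditional entropy H(Y | X) = H(X,Y) - H(X). -/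
def condEnt {Ω α β : Type*} [Fintype Ω] [Fintype α] [Fintype β]
    (p : Ω → ℝ) (Y : Ω → β) (X : Ω → α) : ℝ :=
  ent p (fun ω => (X ω, Y ω)) - ent p X

/-- Mutual information I(X; Y). -/
def mi {Ω α β : Type*} [Fintype Ω] [Fintype α] [Fintype β]
    (p : Ω → ℝ) (X : Ω → α) (Y : Ω → β) : ℝ :=
  ent p X + ent p Y - ent p (fun ω => (X ω, Y ω))

/-- Conditional mutual information I(X; Y | Z). -/
def cmi {Ω α β γ : Type*} [Fintype Ω] [Fintype α] [Fintype β] [Fintype γ]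
    (p : Ω → ℝ) (X : Ω → α) (Y : Ω → β) (Z : Ω → γ) : ℝ :=
  ent p (fun ω => (X ω, Z ω)) + ent p (fun ω => (Y ω, Z ω))
    - ent p (fun ω => (X ω, Y ω, Z ω)) - ent p Z

/-- Independence of two random variables. -/
def IndepRV {Ω α β : Type*} [Fintype Ω] (p : Ω → ℝ) (X : Ω → α) (Y : Ω → β) : Prop :=
  ∀ a b, prE p (fun ω => X ω = a ∧ Y ω = b) = pr p X a * pr p Y b

/-- X is uniformly distributed on its (finite) alphabet. -/
def IsUniform {Ω α : Type*} [Fintype Ω] [Fintype α] (p : Ω → ℝ) (X : Ω → α) : Prop :=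
  ∀ a, pr p X a = 1 / (Fintype.card α : ℝ)

/-- Entropy of Y conditioned on the event E (e.g. {X = x}). -/
def entCondOn {Ω β : Type*} [Fintype Ω] [Fintype β] (p : Ω → ℝ) (Y : Ω → β)
    (E : Ω → Prop) : ℝ :=
  -∑ b, (prE p (fun ω => Y ω = b ∧ E ω) / prE p E) *
      Real.logb 2 (prE p (fun ω => Y ω = b ∧ E ω) / prE p E)

/-- PMF conditioned on the event E. -/
def pCond {Ω : Type*} [Fintype Ω] (p : Ω → ℝ) (E : Ω → Prop) (ω : Ω) : ℝ :=
  if E ω then p ω / prE p E else 0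

/-!
Condition on the event `X = x` and let `q` be the conditional law. As `I(U; X) = 0`, the variable
`U` is independent of `X`, so it has the same law under `q` as under `p`; as `W` is independent of
`(X, Y)`, it remains independent of `Y` under `q`; and as `H(Y | W, U) = 0`, `Y` is a function of
`(W, U)` on the support of `p`, hence on that of `q`. Under `q` therefore
`H(Y) = H(W, Y) - H(W) ≤ H(W, U, Y) - H(W) = H(W, U) - H(W) ≤ H(U)`.
Vanishing mutual information means independence because `I(A; B) · log 2` is the sum of the
nonnegative terms `P_A P_B · klFun (P_AB / (P_A P_B))`.
-/

open Real InformationTheory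

section Probability

variable {Ω α β : Type*} [Fintype Ω] {p : Ω → ℝ}

lemma prE_congr {E F : Ω → Prop} (h : ∀ ω, E ω ↔ F ω) : prE p E = prE p F :=
  Finset.sum_congr rfl fun ω _ => if_congr (h ω) rfl rfl

lemma prE_congr_of_pos (hp : ∀ ω, 0 ≤ p ω) {E F : Ω → Prop}
    (h : ∀ ω, 0 < p ω → (E ω ↔ F ω)) : prE p E = prE p F := by
  refine Finset.sum_congr rfl fun ω _ => ?_
  rcases (hp ω).eq_or_lt with hω | hω
  · simp [← hω]
  · exact if_congr (h ω hω) rfl rfl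

lemma prE_nonneg (hp : ∀ ω, 0 ≤ p ω) (E : Ω → Prop) : 0 ≤ prE p E :=
  Finset.sum_nonneg fun ω _ => by split_ifs <;> simp [hp ω]

lemma pr_nonneg (hp : ∀ ω, 0 ≤ p ω) (Z : Ω → α) (a : α) : 0 ≤ pr p Z a :=
  prE_nonneg hp _

lemma prE_mono (hp : ∀ ω, 0 ≤ p ω) {E F : Ω → Prop} (h : ∀ ω, E ω → F ω) :
    prE p E ≤ prE p F :=
  Finset.sum_le_sum fun ω _ => by
    by_cases hE : E ω
    · simp [hE, h ω hE]
    · by_cases hF : F ω <;> simp [hE, hF, hp ω]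

lemma le_prE (hp : ∀ ω, 0 ≤ p ω) {E : Ω → Prop} {ω : Ω} (hE : E ω) : p ω ≤ prE p E := by
  unfold prE
  simpa [hE] using Finset.single_le_sum (f := fun ω => if E ω then p ω else 0)
    (fun ω' _ => by split_ifs <;> simp [hp ω']) (Finset.mem_univ ω)

lemma exists_pos_of_prE_pos {E : Ω → Prop} (h : 0 < prE p E) : ∃ ω, 0 < p ω ∧ E ω := by
  by_contra! hE
  refine h.not_ge (Finset.sum_nonpos fun ω _ => ?_)
  split_ifs with hω
  · exact not_lt.mp fun hpos => hE ω hpos hω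
  · exact le_rfl

lemma sum_prE_and_eq [Fintype β] (E : Ω → Prop) (B : Ω → β) :
    ∑ b, prE p (fun ω => E ω ∧ B ω = b) = prE p E := by
  unfold prE
  rw [Finset.sum_comm]
  refine Finset.sum_congr rfl fun ω _ => ?_
  by_cases hE : E ω <;> simp [hE]

lemma pr_pair (A : Ω → α) (B : Ω → β) (a : α) (b : β) :
    pr p (fun ω => (A ω, B ω)) (a, b) = prE p (fun ω => A ω = a ∧ B ω = b) :=
  prE_congr fun _ => Prod.ext_iff

lemma pr_le_pr_pair_fst (hp : ∀ ω, 0 ≤ p ω) (A : Ω → α) (B : Ω → β) (a : α) (b : β) :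
    pr p (fun ω => (A ω, B ω)) (a, b) ≤ pr p A a :=
  prE_mono hp fun _ h => congrArg Prod.fst h

lemma pr_le_pr_pair_snd (hp : ∀ ω, 0 ≤ p ω) (A : Ω → α) (B : Ω → β) (a : α) (b : β) :
    pr p (fun ω => (A ω, B ω)) (a, b) ≤ pr p B b :=
  prE_mono hp fun _ h => congrArg Prod.snd h

lemma sum_pr_mul [Fintype α] (Z : Ω → α) (g : α → ℝ) :
    ∑ a, pr p Z a * g a = ∑ ω, p ω * g (Z ω) := by
  simp only [pr, prE, Finset.sum_mul]
  rw [Finset.sum_comm]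
  refine Finset.sum_congr rfl fun ω _ => ?_
  simp [ite_mul]

lemma sum_pr [Fintype α] (Z : Ω → α) : ∑ a, pr p Z a = ∑ ω, p ω := by
  simpa using sum_pr_mul (p := p) Z fun _ => 1

lemma sum_pr_comp_mul [Fintype α] [Fintype β] (f : α → β) (Z : Ω → α) (g : β → ℝ) :
    ∑ b, pr p (fun ω => f (Z ω)) b * g b = ∑ a, pr p Z a * g (f a) := by
  rw [sum_pr_mul, sum_pr_mul]

lemma sum_pr_pair [Fintype β] (A : Ω → α) (B : Ω → β) (a : α) :
    ∑ b, pr p (fun ω => (A ω, B ω)) (a, b) = pr p A a := by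
  simp only [pr_pair]
  exact sum_prE_and_eq _ B

lemma pr_pair_eq_zero_of_mul_eq_zero (hp : ∀ ω, 0 ≤ p ω) (A : Ω → α) (B : Ω → β) {a : α}
    {b : β} (h : pr p A a * pr p B b = 0) : pr p (fun ω => (A ω, B ω)) (a, b) = 0 := by
  refine le_antisymm ?_ (pr_nonneg hp _ _)
  rcases mul_eq_zero.mp h with h | h
  · exact h ▸ pr_le_pr_pair_fst hp A B a b
  · exact h ▸ pr_le_pr_pair_snd hp A B a b

end Probability

section Entropy

variable {Ω α β : Type*} [Fintype Ω] [Fintype α] [Fintype β] {p : Ω → ℝ}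

lemma ent_mul_log_two (Z : Ω → α) : ent p Z * log 2 = -∑ a, pr p Z a * log (pr p Z a) := by
  rw [ent, neg_mul, Finset.sum_mul]
  congr 1
  refine Finset.sum_congr rfl fun a _ => ?_
  rw [logb, mul_assoc, div_mul_cancel₀ _ (log_pos one_lt_two).ne']

lemma ent_comp_mul_log_two (f : α → β) (Z : Ω → α) :
    ent p (fun ω => f (Z ω)) * log 2 =
      -∑ a, pr p Z a * log (pr p (fun ω => f (Z ω)) (f a)) := by
  rw [ent_mul_log_two]
  congr 1
  exact sum_pr_comp_mul f Z _

lemma ent_comp_le (hp : ∀ ω, 0 ≤ p ω) (f : α → β) (Z : Ω → α) :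
    ent p (fun ω => f (Z ω)) ≤ ent p Z := by
  refine le_of_mul_le_mul_right ?_ (log_pos one_lt_two)
  rw [ent_comp_mul_log_two, ent_mul_log_two, neg_le_neg_iff]
  refine Finset.sum_le_sum fun a _ => ?_
  rcases (pr_nonneg hp Z a).eq_or_lt with h | h
  · rw [← h, zero_mul, zero_mul]
  · exact mul_le_mul_of_nonneg_left (log_le_log h (prE_mono hp fun _ => congrArg f)) h.le

lemma ent_fst_mul_log_two (A : Ω → α) (B : Ω → β) :
    ent p A * log 2 = -∑ z : α × β, pr p (fun ω => (A ω, B ω)) z * log (pr p A z.1) :=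
  ent_comp_mul_log_two Prod.fst (fun ω => (A ω, B ω))

lemma ent_snd_mul_log_two (A : Ω → α) (B : Ω → β) :
    ent p B * log 2 = -∑ z : α × β, pr p (fun ω => (A ω, B ω)) z * log (pr p B z.2) :=
  ent_comp_mul_log_two Prod.snd (fun ω => (A ω, B ω))

end Entropy

section Information

variable {Ω α β : Type*} [Fintype Ω] [Fintype α] [Fintype β] {p : Ω → ℝ}

lemma mul_klFun_div {x y : ℝ} (h : y = 0 → x = 0) :
    y * klFun (x / y) = x * log (x / y) + y - x := by
  by_cases hy : y = 0
  · simp [hy, h hy]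
  · rw [klFun_apply]
    linear_combination (log (x / y) - 1) * mul_div_cancel₀ x hy

lemma mul_klFun_div_eq_zero_iff {x y : ℝ} (hx : 0 ≤ x) (hy : 0 ≤ y) (h : y = 0 → x = 0) :
    y * klFun (x / y) = 0 ↔ x = y := by
  rcases hy.eq_or_lt with hy | hy
  · simp [← hy, h hy.symm]
  · rw [mul_eq_zero_iff_left hy.ne', klFun_eq_zero_iff (div_nonneg hx hy.le),
      div_eq_one_iff_eq hy.ne']

lemma mul_klFun_nonneg {x y : ℝ} (hx : 0 ≤ x) (hy : 0 ≤ y) : 0 ≤ y * klFun (x / y) :=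
  mul_nonneg hy (klFun_nonneg (div_nonneg hx hy))

lemma mi_mul_log_two_eq_sum_klFun (hp : IsPMF p) (A : Ω → α) (B : Ω → β) :
    mi p A B * log 2 = ∑ z : α × β, pr p A z.1 * pr p B z.2 *
      klFun (pr p (fun ω => (A ω, B ω)) z / (pr p A z.1 * pr p B z.2)) := by
  set P := pr p (fun ω => (A ω, B ω))
  have hsum : ∑ z : α × β, pr p A z.1 * pr p B z.2 = ∑ z, P z := by
    rw [Fintype.sum_prod_type, ← Finset.sum_mul_sum, sum_pr, sum_pr, sum_pr, hp.2, one_mul]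
  have hterm : ∀ z : α × β, pr p A z.1 * pr p B z.2 * klFun (P z / (pr p A z.1 * pr p B z.2)) =
      P z * (log (P z) - log (pr p A z.1) - log (pr p B z.2)) + pr p A z.1 * pr p B z.2 - P z := by
    rintro ⟨a, b⟩
    rcases (show 0 ≤ P (a, b) from pr_nonneg hp.1 _ _).eq_or_lt with h | h
    · simp [← h, klFun_zero]
    · rw [mul_klFun_div (pr_pair_eq_zero_of_mul_eq_zero hp.1 A B)]
      have ha := h.trans_le (pr_le_pr_pair_fst hp.1 A B a b)
      have hb := h.trans_le (pr_le_pr_pair_snd hp.1 A B a b)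
      rw [log_div h.ne' (mul_pos ha hb).ne', log_mul ha.ne' hb.ne', sub_add_eq_sub_sub]
  rw [Finset.sum_congr rfl fun z _ => hterm z, Finset.sum_sub_distrib, Finset.sum_add_distrib,
    hsum, add_sub_cancel_right, mi, sub_mul, add_mul, ent_fst_mul_log_two A B,
    ent_snd_mul_log_two A B, ent_mul_log_two]
  simp only [mul_sub, Finset.sum_sub_distrib]
  ring

lemma mi_nonneg (hp : IsPMF p) (A : Ω → α) (B : Ω → β) : 0 ≤ mi p A B := by
  refine nonneg_of_mul_nonneg_left ?_ (log_pos one_lt_two)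
  rw [mi_mul_log_two_eq_sum_klFun hp]
  exact Finset.sum_nonneg fun z _ => mul_klFun_nonneg (pr_nonneg hp.1 _ z)
    (mul_nonneg (pr_nonneg hp.1 A z.1) (pr_nonneg hp.1 B z.2))

lemma mi_eq_zero_iff_indepRV (hp : IsPMF p) (A : Ω → α) (B : Ω → β) :
    mi p A B = 0 ↔ IndepRV p A B := by
  rw [← mul_eq_zero_iff_right (log_pos one_lt_two).ne', mi_mul_log_two_eq_sum_klFun hp,
    Finset.sum_eq_zero_iff_of_nonneg fun z _ => mul_klFun_nonneg (pr_nonneg hp.1 _ z)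
      (mul_nonneg (pr_nonneg hp.1 A z.1) (pr_nonneg hp.1 B z.2))]
  simp only [Finset.mem_univ, true_implies, Prod.forall, IndepRV, ← pr_pair]
  exact forall₂_congr fun a b => mul_klFun_div_eq_zero_iff (pr_nonneg hp.1 _ _)
    (mul_nonneg (pr_nonneg hp.1 A a) (pr_nonneg hp.1 B b))
    (pr_pair_eq_zero_of_mul_eq_zero hp.1 A B)

lemma condEnt_mul_log_two (A : Ω → α) (B : Ω → β) :
    condEnt p B A * log 2 = ∑ z : α × β, pr p (fun ω => (A ω, B ω)) z *
      (log (pr p A z.1) - log (pr p (fun ω => (A ω, B ω)) z)) := by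
  rw [condEnt, sub_mul, ent_mul_log_two, ent_fst_mul_log_two A B]
  simp only [mul_sub, Finset.sum_sub_distrib]
  ring

lemma condEnt_eq_zero_iff_pr_pair_eq (hp : ∀ ω, 0 ≤ p ω) (A : Ω → α) (B : Ω → β) :
    condEnt p B A = 0 ↔ ∀ a b, 0 < pr p (fun ω => (A ω, B ω)) (a, b) →
      pr p (fun ω => (A ω, B ω)) (a, b) = pr p A a := by
  have hterm : ∀ a b, 0 < pr p (fun ω => (A ω, B ω)) (a, b) →
      0 < pr p A a ∧ 0 ≤ log (pr p A a) - log (pr p (fun ω => (A ω, B ω)) (a, b)) :=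
    fun a b h => ⟨h.trans_le (pr_le_pr_pair_fst hp A B a b),
      sub_nonneg.mpr (log_le_log h (pr_le_pr_pair_fst hp A B a b))⟩
  rw [← mul_eq_zero_iff_right (log_pos one_lt_two).ne', condEnt_mul_log_two,
    Finset.sum_eq_zero_iff_of_nonneg]
  · simp only [Finset.mem_univ, true_implies, Prod.forall]
    refine forall₂_congr fun a b => ?_
    rcases (pr_nonneg hp (fun ω => (A ω, B ω)) (a, b)).eq_or_lt with h | h
    · simp [← h]
    · rw [mul_eq_zero_iff_left h.ne', sub_eq_zero, log_injOn_pos.eq_iff (hterm a b h).1 h]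
      exact ⟨fun h' _ => h'.symm, fun h' => (h' h).symm⟩
  · rintro ⟨a, b⟩ -
    rcases (pr_nonneg hp (fun ω => (A ω, B ω)) (a, b)).eq_or_lt with h | h
    · rw [← h, zero_mul]
    · exact mul_nonneg h.le (hterm a b h).2

end Information

section Determines

variable {Ω α β : Type*} [Fintype Ω] {p : Ω → ℝ}

def Determines (p : Ω → ℝ) (A : Ω → α) (B : Ω → β) : Prop :=
  ∀ ω ω', 0 < p ω → 0 < p ω' → A ω = A ω' → B ω = B ω'

lemma determines_iff_pr_pair_eq [Fintype β] (hp : ∀ ω, 0 ≤ p ω) (A : Ω → α) (B : Ω → β) :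
    Determines p A B ↔ ∀ a b, 0 < pr p (fun ω => (A ω, B ω)) (a, b) →
      pr p (fun ω => (A ω, B ω)) (a, b) = pr p A a := by
  constructor
  · intro hdet a b hab
    obtain ⟨ω, hω, hAB⟩ := exists_pos_of_prE_pos hab
    obtain ⟨rfl, rfl⟩ := Prod.mk.inj hAB
    refine (prE_congr_of_pos hp fun ω' hω' => ⟨fun h => ?_, fun h => congrArg Prod.fst h⟩).symm
    exact Prod.ext h (hdet ω' ω hω' hω h)
  · intro h ω ω' hω hω' hA
    by_contra hB
    have hpos : ∀ ω₀, 0 < p ω₀ → 0 < pr p (fun ω => (A ω, B ω)) (A ω₀, B ω₀) :=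
      fun ω₀ hω₀ => hω₀.trans_le (le_prE hp rfl)
    have h₁ := h _ _ (hpos ω hω)
    have h₂ := h _ _ (hpos ω' hω')
    rw [← hA] at h₂
    have hsum := Finset.sum_le_sum_of_subset_of_nonneg (Finset.subset_univ {B ω, B ω'})
      fun b _ _ => pr_nonneg hp (fun ω => (A ω, B ω)) (A ω, b)
    rw [Finset.sum_pair hB, sum_pr_pair, h₁, h₂] at hsum
    linarith [hpos ω hω]

lemma condEnt_eq_zero_iff_determines [Fintype α] [Fintype β] (hp : ∀ ω, 0 ≤ p ω)
    (A : Ω → α) (B : Ω → β) : condEnt p B A = 0 ↔ Determines p A B :=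
  (condEnt_eq_zero_iff_pr_pair_eq hp A B).trans (determines_iff_pr_pair_eq hp A B).symm

end Determines

section Conditioning

variable {Ω α β γ : Type*} [Fintype Ω] {p : Ω → ℝ}

lemma prE_pCond (E F : Ω → Prop) :
    prE (pCond p E) F = prE p (fun ω => F ω ∧ E ω) / prE p E := by
  unfold prE pCond
  rw [Finset.sum_div]
  refine Finset.sum_congr rfl fun ω _ => ?_
  by_cases hF : F ω <;> by_cases hE : E ω <;> simp [hF, hE, prE]

lemma isPMF_pCond (hp : IsPMF p) {E : Ω → Prop} (hE : 0 < prE p E) : IsPMF (pCond p E) := by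
  refine ⟨fun ω => ?_, ?_⟩
  · unfold pCond
    split_ifs
    exacts [div_nonneg (hp.1 ω) hE.le, le_rfl]
  · have := prE_pCond (p := p) E fun _ => True
    simp only [true_and] at this
    rw [div_self hE.ne'] at this
    simpa [prE] using this

lemma pos_of_pCond_pos (hp : ∀ ω, 0 ≤ p ω) {E : Ω → Prop} {ω : Ω} (h : 0 < pCond p E ω) :
    0 < p ω := by
  refine (hp ω).lt_of_ne' fun h0 => h.ne' ?_
  simp [pCond, h0]

lemma Determines.pCond (hp : ∀ ω, 0 ≤ p ω) {A : Ω → α} {B : Ω → β} (h : Determines p A B)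
    (E : Ω → Prop) : Determines (pCond p E) A B :=
  fun ω ω' hω hω' => h ω ω' (pos_of_pCond_pos hp hω) (pos_of_pCond_pos hp hω')

lemma entCondOn_eq_ent_pCond [Fintype β] (Z : Ω → β) (E : Ω → Prop) :
    entCondOn p Z E = ent (pCond p E) Z := by
  simp only [entCondOn, ent, pr, prE_pCond]

lemma pr_pCond_eq_of_indepRV {Z : Ω → β} {X : Ω → α} (h : IndepRV p Z X) {x : α}
    (hx : pr p X x ≠ 0) : pr (pCond p fun ω => X ω = x) Z = pr p Z := by
  funext z
  rw [pr, prE_pCond, h z x]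
  exact mul_div_cancel_right₀ _ hx

lemma indepRV_of_prE_and_eq_mul [Fintype β] (hp : IsPMF p) {A : Ω → α} {B : Ω → β}
    (c : α → ℝ) (h : ∀ a b, prE p (fun ω => A ω = a ∧ B ω = b) = c a * pr p B b) :
    IndepRV p A B := by
  have hc : ∀ a, pr p A a = c a := fun a => by
    rw [pr, ← sum_prE_and_eq (fun ω => A ω = a) B]
    simp only [h, ← Finset.mul_sum, sum_pr, hp.2, mul_one]
  intro a b
  rw [h, hc]

lemma indepRV_pCond_of_indepRV_prod [Fintype β] (hp : IsPMF p) {W : Ω → γ} {X : Ω → α}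
    {Y : Ω → β} (h : IndepRV p W fun ω => (X ω, Y ω)) {x : α} (hx : 0 < pr p X x) :
    IndepRV (pCond p fun ω => X ω = x) W Y := by
  refine indepRV_of_prE_and_eq_mul (isPMF_pCond hp hx) (pr p W) fun w y => ?_
  have hY : pr (pCond p fun ω => X ω = x) Y y = pr p (fun ω => (X ω, Y ω)) (x, y) / pr p X x :=
    (prE_pCond _ _).trans (by rw [pr_pair]; exact congrArg (· / _) (prE_congr fun _ => and_comm))
  rw [hY, ← mul_div_assoc, ← h w (x, y), prE_pCond]
  refine congrArg (· / _) (prE_congr fun ω => ?_)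
  simp only [Prod.ext_iff]
  tauto

end Conditioning

/-- Converse (Theorem 2): with W ⟂ (X, Y), I(U; X) = 0 and
H(Y_{d_1},…,Y_{d_K} | W, U) = 0, we get H(U) ≥ H(Y_{d_1},…,Y_{d_K} | X = x)
for every x with P(X = x) > 0. -/
theorem stmt9 {Ω αX γW γU : Type*} [Fintype Ω] [Fintype αX] [Fintype γW] [Fintype γU]
    {K : ℕ} {Yalph : Fin K → Type*} [∀ i, Fintype (Yalph i)]
    (p : Ω → ℝ) (hp : IsPMF p) (X : Ω → αX) (Y : ∀ i, Ω → Yalph i)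
    (W : Ω → γW) (U : Ω → γU)
    (hW : IndepRV p W (fun ω => (X ω, fun i => Y i ω)))
    (hpriv : mi p U X = 0)
    (hdec : condEnt p (fun ω => fun i => Y i ω) (fun ω => (W ω, U ω)) = 0) :
    ∀ x : αX, 0 < pr p X x →
      entCondOn p (fun ω => fun i => Y i ω) (fun ω => X ω = x) ≤ ent p U := by
  intro x hx
  set Y' : Ω → ∀ i, Yalph i := fun ω i => Y i ω
  set q := pCond p fun ω => X ω = x
  have hq : IsPMF q := isPMF_pCond hp hx
  have hU : pr q U = pr p U :=
    pr_pCond_eq_of_indepRV ((mi_eq_zero_iff_indepRV hp U X).1 hpriv) hx.ne'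
  have hWY : mi q W Y' = 0 :=
    (mi_eq_zero_iff_indepRV hq W Y').2 (indepRV_pCond_of_indepRV_prod hp hW hx)
  have hdet : condEnt q Y' (fun ω => (W ω, U ω)) = 0 :=
    (condEnt_eq_zero_iff_determines hq.1 _ _).2
      (((condEnt_eq_zero_iff_determines hp.1 _ _).1 hdec).pCond hp.1 _)
  rw [entCondOn_eq_ent_pCond]
  calc ent q Y' = ent q (fun ω => (W ω, Y' ω)) - ent q W := by
        rw [mi] at hWY
        linarith
    _ ≤ ent q (fun ω => ((W ω, U ω), Y' ω)) - ent q W := by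
        gcongr
        exact ent_comp_le hq.1 (fun z : (γW × γU) × (∀ i, Yalph i) => (z.1.1, z.2))
          fun ω => ((W ω, U ω), Y' ω)
    _ = ent q (fun ω => (W ω, U ω)) - ent q W := by
        rw [condEnt] at hdet
        linarith
    _ ≤ ent q U := by
        have := mi_nonneg hq W U
        rw [mi] at this
        linarith
    _ = ent p U := by simp only [ent, hU]
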